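/- Let p/q = [a_1,…,a_n] be an irreducible fraction with 0 < p/q < 1 and N = a_1 + ⋯ + a_n − 1. Then the cluster variable X_{p/q} equals (D/(x_1 x_2 ⋯ x_N)) · Σ_{γ ∈ Γ_{p/q}} w(γ), where D = Π_{i=1}^N (the denominator of the Laurent monomial w(T_i)). -/

import Mathlib

/-!
Ancestral triangles of continued fractions (Yamada / Farey diagrams),
following "Cluster variables and Alexander polynomials of 2-bridge knots".
-/

noncomputable section

open scoped BigOperators

attribute [local instance] Classical.propDecidable

namespace TwoBridge

/-- The continued fraction `[a₁,…,aₙ] = 1/(a₁ + 1/(a₂ + ⋯ + 1/aₙ))`. -/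
def cf : List ℕ → ℚ
  | [] => 0
  | a :: t => 1 / ((a : ℚ) + cf t)

/-- Partial sums `l_k = a₁ + ⋯ + a_k`. -/
def ell (a : List ℕ) (k : ℕ) : ℕ := (a.take k).sum

/-- The index of the fan containing the `i`-th triangle (1-based): the least `k` with
`i ≤ l_k − 1`.  Fan 1 consists of `T_1, …, T_{a₁−1}` and, for `k ≥ 2`, fan `k` consists of
`T_{l_{k−1}}, …, T_{l_k − 1}`. -/
def fanIdx (a : List ℕ) (i : ℕ) : ℕ := sInf {k | i < ell a k}

/-- The `i`-th triangle (1-based) of the ancestral triangle of `[a₁,…,aₙ]` is a *right*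
triangle iff it lies in an odd-indexed fan (first `a₁ − 1` triangles are right, the next
`a₂` left, the next `a₃` right, and so on alternately). -/
def isRight (a : List ℕ) (i : ℕ) : Prop := Odd (fanIdx a i)

/-- Vertex indices of the ancestral triangle: `0 ↦ 0/1`, `1 ↦ 1/1`, and `j + 1 ↦` the apex
(new vertex) of the triangle `T_j`.  `edgeIdx a i` is the pair of vertex indices
(left endpoint, right endpoint) of the most recently created edge after stacking `i`
triangles; the triangle `T_{i+1}` is stacked on this edge. -/
def edgeIdx (a : List ℕ) : ℕ → ℕ × ℕ
  | 0 => (0, 1)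
  | i + 1 => if isRight a (i + 1) then ((edgeIdx a i).1, i + 2) else (i + 2, (edgeIdx a i).2)

/-- The labels (numerator, denominator) of the endpoints of the active edge after stacking
`i` triangles; the new vertex of each triangle is labelled by the mediant of the two
endpoints of the edge it is stacked on. -/
def edgeLbl (a : List ℕ) : ℕ → (ℕ × ℕ) × (ℕ × ℕ)
  | 0 => ((0, 1), (1, 1))
  | i + 1 =>
      if isRight a (i + 1) then
        ((edgeLbl a i).1,
          ((edgeLbl a i).1.1 + (edgeLbl a i).2.1, (edgeLbl a i).1.2 + (edgeLbl a i).2.2))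
      else
        (((edgeLbl a i).1.1 + (edgeLbl a i).2.1, (edgeLbl a i).1.2 + (edgeLbl a i).2.2),
          (edgeLbl a i).2)

/-- The label (numerator, denominator) of the vertex with index `v`. -/
def vtxLabel (a : List ℕ) (v : ℕ) : ℕ × ℕ :=
  if v = 0 then (0, 1)
  else if v = 1 then (1, 1)
  else ((edgeLbl a (v - 2)).1.1 + (edgeLbl a (v - 2)).2.1,
        (edgeLbl a (v - 2)).1.2 + (edgeLbl a (v - 2)).2.2)

/-- `u` and `w` are joined by an edge of the ancestral triangle. -/
def IsEdgeAT (a : List ℕ) (u w : ℕ) : Prop :=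
  (u = 0 ∧ w = 1) ∨ (u = 1 ∧ w = 0) ∨
    (2 ≤ u ∧ (w = (edgeIdx a (u - 2)).1 ∨ w = (edgeIdx a (u - 2)).2)) ∨
    (2 ≤ w ∧ (u = (edgeIdx a (w - 2)).1 ∨ u = (edgeIdx a (w - 2)).2))

/-- A step of a path: an edge of the ancestral triangle along which the denominator of the
vertex label strictly decreases. -/
def IsStep (a : List ℕ) (u w : ℕ) : Prop :=
  IsEdgeAT a u w ∧ (vtxLabel a w).2 < (vtxLabel a u).2

/-- `IsPathFrom a s γ` : `γ` is a path of the ancestral triangle of `a` starting at the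
vertex with index `s` and ending at `0/1` or `1/1`, the denominator of the label strictly
decreasing along every edge. -/
def IsPathFrom (a : List ℕ) (s : ℕ) (γ : List ℕ) : Prop :=
  γ.head? = some s ∧ (γ.getLast? = some 0 ∨ γ.getLast? = some 1) ∧ List.Chain' (IsStep a) γ

/-- The (indices of the) triangles cut off to the left of the path by a single step from
vertex `u` down to vertex `w`. -/
def stepLeft (a : List ℕ) (u w : ℕ) : Finset ℕ :=
  if 2 ≤ u ∧ w = (edgeIdx a (u - 2)).2 then Finset.Ioc (w - 1) (u - 1) else ∅

/-- The set `S_γ` of (indices of) triangles lying on the left side of the path `γ`. -/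
def pathLeftSet (a : List ℕ) (γ : List ℕ) : Finset ℕ :=
  (γ.zip γ.tail).foldr (fun p s => stepLeft a p.1 p.2 ∪ s) ∅



/-- The ambient field: rational functions in the `2N` variables
`x₁, …` (indexed by `Sum.inl`) and `y₁, …` (indexed by `Sum.inr`). -/
abbrev KK : Type := FractionRing (MvPolynomial (ℕ ⊕ ℕ) ℚ)

/-- The initial cluster variables `x_i`, with the convention `x_{l_n} = x_{N+1} = 1`
(note `a.sum = N + 1`). -/
def xv (a : List ℕ) (i : ℕ) : KK :=
  if i = a.sum then 1
  else algebraMap (MvPolynomial (ℕ ⊕ ℕ) ℚ) KK (MvPolynomial.X (Sum.inl i))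

/-- The coefficient variables `y_i`. -/
def yv (i : ℕ) : KK := algebraMap (MvPolynomial (ℕ ⊕ ℕ) ℚ) KK (MvPolynomial.X (Sum.inr i))

/-- The weight `w(T_i)` of the `i`-th triangle. -/
def triW (a : List ℕ) (i : ℕ) : KK :=
  if i = 1 then (if isRight a 1 then yv 1 * xv a 2 else yv 1 / xv a 2)
  else if isRight a i then
    (if isRight a (i - 1) then yv i * xv a (i + 1) / xv a (i - 1)
     else yv i * xv a (i - 1) * xv a (i + 1))
  else
    (if isRight a (i - 1) then yv i / (xv a (i - 1) * xv a (i + 1))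
     else yv i * xv a (i - 1) / xv a (i + 1))

/-- The denominator of the Laurent monomial `w(T_i)`. -/
def triDen (a : List ℕ) (i : ℕ) : KK :=
  if i = 1 then (if isRight a 1 then 1 else xv a 2)
  else if isRight a i then (if isRight a (i - 1) then xv a (i - 1) else 1)
  else (if isRight a (i - 1) then xv a (i - 1) * xv a (i + 1) else xv a (i + 1))

/-- The weight `w(γ) = ∏_{T_i ∈ S_γ} w(T_i)` of a path `γ`. -/
def pathW (a : List ℕ) (γ : List ℕ) : KK := ∏ i ∈ pathLeftSet a γ, triW a i

/-- A seed (with principal coefficients): an `N`-tuple of rational functions, an `N`-tuple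
of elements of the tropical semifield `Trop(y₁,…,y_N)` (recorded as exponent vectors:
the tropical monomial `∏ y_j ^ (e j)` is recorded as `e : ℕ → ℤ`), and a skew-symmetric
integer matrix.  (Indices `1, …, N` are used; values outside this range are irrelevant.) -/
structure Seed where
  /-- the cluster variables -/
  X : ℕ → KK
  /-- the coefficient tuple, as tropical exponent vectors -/
  u : ℕ → ℕ → ℤ
  /-- the exchange matrix -/
  B : ℕ → ℕ → ℤ

/-- Evaluation of a tropical monomial (exponent vector) in the ambient field. -/
def tropEval (a : List ℕ) (e : ℕ → ℤ) : KK :=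
  ∏ i ∈ Finset.Icc 1 (a.sum - 1), yv i ^ e i

/-- Mutation of a seed in direction `k`.  Note that in the tropical semifield
`u_k ⊕ 1` has exponent vector `i ↦ min (u_k i) 0`. -/
def mutate (a : List ℕ) (s : Seed) (k : ℕ) : Seed where
  B := fun i j =>
    if i = k ∨ j = k then -s.B i j
    else s.B i j + (s.B i k).sign * max (s.B i k * s.B k j) 0
  u := fun j i =>
    if j = k then -s.u k i
    else s.u j i + max (s.B k j) 0 * s.u k i + (-s.B k j) * min (s.u k i) 0
  X := fun j =>
    if j = k then
      ((∏ i ∈ Finset.Icc 1 (a.sum - 1), s.X i ^ max (-s.B i k) 0) +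
          tropEval a (s.u k) * ∏ i ∈ Finset.Icc 1 (a.sum - 1), s.X i ^ max (s.B i k) 0) /
        (tropEval a (fun i => min (s.u k i) 0) * s.X k)
    else s.X j

/-- The initial seed attached to the ancestral triangle of `a`: initial cluster variables
`x₁, …, x_N`, principal coefficients `y₁, …, y_N`, and the matrix of the initial quiver
`Q₀`, which has an arrow from `i+1` to `i` if `T_i` is a right triangle and an arrow from
`i` to `i+1` if `T_i` is a left triangle. -/
def initSeed (a : List ℕ) : Seed where
  X := fun i => xv a i
  u := fun j i => if i = j then 1 else 0
  B := fun i j =>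
    if 1 ≤ i ∧ j = i + 1 ∧ j ≤ a.sum - 1 then (if isRight a i then -1 else 1)
    else if 1 ≤ j ∧ i = j + 1 ∧ i ≤ a.sum - 1 then (if isRight a j then 1 else -1)
    else 0

/-- The seed `μ_k ∘ μ_{k-1} ∘ ⋯ ∘ μ_1 (x₀, y₀, Q₀)`. -/
def seedAfter (a : List ℕ) (k : ℕ) : Seed :=
  (List.range' 1 k).foldl (mutate a) (initSeed a)

/-- The cluster variable `X_{p/q}` attached to the ancestral triangle of `a`
(`p/q = [a₁,…,aₙ]`): the `N`-th entry of the cluster of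
`μ_N ∘ ⋯ ∘ μ_1 (x₀, y₀, Q₀)`, where `N = a₁ + ⋯ + aₙ − 1`. -/
def clusterVar (a : List ℕ) : KK := (seedAfter a (a.sum - 1)).X (a.sum - 1)


/-!
Write `expansion a v` for the right-hand side of the formula for the ancestral triangle formed by
`T_1, …, T_{v-1}`, whose top vertex has index `v`. A path from `v` starts with a step to one of the
endpoints `b₁, b₂` of the edge carrying `T_{v-1}`, so the path sums satisfy
`P(v) = P(b₁) + w(T_{b₂}) ⋯ w(T_{v-1}) · P(b₂)`. After `μ_k ∘ ⋯ ∘ μ_1` the variable `x_j`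
(`j ≤ k`) has become `expansion a (j + 1)`, the quiver vertex `k + 1` is joined exactly to `k + 2`
and to the variables of the endpoints `b₁, b₂` of the edge carrying `T_{k+1}`, and
`u_{k+1} = y_{b₂} ⋯ y_{k+1}`. The exchange relation of `μ_{k+1}` is then the path recursion at
`v = k + 2` multiplied by two monomial identities between the prefactors `D_j / (x₁ ⋯ x_j)`.
-/

end TwoBridge

lemma Int.sign_mul_max_mul_zero_comm (x y : ℤ) :
    x.sign * max (x * y) 0 = y.sign * max (x * y) 0 := by
  rcases lt_trichotomy x 0 with hx | rfl | hx <;> rcases lt_trichotomy y 0 with hy | rfl | hy <;>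
    simp [Int.sign_eq_neg_one_of_neg, Int.sign_eq_one_of_pos, *] <;>
    rw [max_eq_right (by nlinarith)] <;> simp

lemma Finset.prod_eq_ite_mul_ite {ι M : Type*} [DecidableEq ι] [CommMonoid M] {s : Finset ι}
    {f : ι → M} {p q : ι} (hpq : p ≠ q) (h : ∀ i ∈ s, i ≠ p → i ≠ q → f i = 1) :
    ∏ i ∈ s, f i = (if p ∈ s then f p else 1) * (if q ∈ s then f q else 1) := by
  rw [← Finset.prod_congr rfl fun i (hi : i ∈ s) => if_pos hi]
  exact Finset.prod_eq_mul p q hpq (fun i hi hne => by rw [if_pos hi]; exact h i hi hne.1 hne.2)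
    (fun hp => if_neg hp) (fun hq => if_neg hq)

namespace TwoBridge

lemma cf_eq_zero_of_sum_eq_zero : ∀ a : List ℕ, a.sum = 0 → cf a = 0
  | [], _ => rfl
  | x :: t, h => by
    rw [List.sum_cons] at h
    simp [cf, cf_eq_zero_of_sum_eq_zero t (by omega), show x = 0 by omega]

lemma cf_eq_zero_or_one_of_sum_le_one : ∀ a : List ℕ, a.sum ≤ 1 → cf a = 0 ∨ cf a = 1
  | [], _ => Or.inl rfl
  | x :: t, h => by
    rw [List.sum_cons] at h
    obtain rfl | rfl : x = 0 ∨ x = 1 := by omega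
    · rcases cf_eq_zero_or_one_of_sum_le_one t (by omega) with ht | ht <;> simp [cf, ht]
    · simp [cf, cf_eq_zero_of_sum_eq_zero t (by omega)]

lemma two_le_sum_of_cf_pos_of_lt_one {a : List ℕ} (h0 : 0 < cf a) (h1 : cf a < 1) :
    2 ≤ a.sum := by
  by_contra! h
  rcases cf_eq_zero_or_one_of_sum_le_one a (by omega) with h' | h' <;> rw [h'] at h0 h1
  exacts [h0.false, h1.false]

section Triangle

variable (a : List ℕ)

lemma edgeIdx_le (i : ℕ) : (edgeIdx a i).1 ≤ i + 1 ∧ (edgeIdx a i).2 ≤ i + 1 := by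
  induction i with
  | zero => simp [edgeIdx]
  | succ n ih => rw [edgeIdx]; split_ifs <;> constructor <;> simp <;> omega

lemma one_le_edgeIdx_snd (i : ℕ) : 1 ≤ (edgeIdx a i).2 := by
  induction i with
  | zero => simp [edgeIdx]
  | succ n ih => rw [edgeIdx]; split_ifs <;> dsimp only <;> omega

lemma edgeIdx_fst_ne_snd (i : ℕ) : (edgeIdx a i).1 ≠ (edgeIdx a i).2 := by
  cases i with
  | zero => simp [edgeIdx]
  | succ n =>
    have := edgeIdx_le a n
    rw [edgeIdx]; split_ifs <;> simp <;> omega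

variable {a} in
lemma edgeIdx_succ_of_isRight {i : ℕ} (h : isRight a (i + 1)) :
    edgeIdx a (i + 1) = ((edgeIdx a i).1, i + 2) := by
  rw [edgeIdx, if_pos h]

variable {a} in
lemma edgeIdx_succ_of_not_isRight {i : ℕ} (h : ¬isRight a (i + 1)) :
    edgeIdx a (i + 1) = (i + 2, (edgeIdx a i).2) := by
  rw [edgeIdx, if_neg h]

lemma one_le_edgeLbl_den (i : ℕ) : 1 ≤ (edgeLbl a i).1.2 ∧ 1 ≤ (edgeLbl a i).2.2 := by
  induction i with
  | zero => simp [edgeLbl]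
  | succ n ih => rw [edgeLbl]; split_ifs <;> constructor <;> simp <;> omega

lemma vtxLabel_of_two_le {v : ℕ} (hv : 2 ≤ v) :
    vtxLabel a v = ((edgeLbl a (v - 2)).1.1 + (edgeLbl a (v - 2)).2.1,
      (edgeLbl a (v - 2)).1.2 + (edgeLbl a (v - 2)).2.2) := by
  rw [vtxLabel, if_neg (by omega), if_neg (by omega)]

lemma vtxLabel_edgeIdx (i : ℕ) :
    vtxLabel a (edgeIdx a i).1 = (edgeLbl a i).1 ∧
      vtxLabel a (edgeIdx a i).2 = (edgeLbl a i).2 := by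
  induction i with
  | zero => simp [edgeIdx, edgeLbl, vtxLabel]
  | succ n ih =>
    have hv := vtxLabel_of_two_le a (le_add_self : 2 ≤ n + 2)
    rw [Nat.add_sub_cancel] at hv
    rw [edgeIdx, edgeLbl]
    split_ifs <;> constructor <;> simp only [ih.1, ih.2, hv]

lemma strictMono_edgeLbl_den_add :
    StrictMono fun i => (edgeLbl a i).1.2 + (edgeLbl a i).2.2 := by
  refine strictMono_nat_of_lt_succ fun n => ?_
  have := one_le_edgeLbl_den a n
  rw [edgeLbl]
  split_ifs <;> simp <;> omega

lemma vtxLabel_den_lt_of_lt {v w : ℕ} (hv : 1 ≤ v) (hvw : v < w) :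
    (vtxLabel a v).2 < (vtxLabel a w).2 := by
  rw [vtxLabel_of_two_le a (by omega : 2 ≤ w)]
  rcases Nat.lt_or_ge v 2 with h | h
  · have := one_le_edgeLbl_den a (w - 2)
    simp [show v = 1 by omega, vtxLabel]
    omega
  · rw [vtxLabel_of_two_le a h]
    exact strictMono_edgeLbl_den_add a (by omega : v - 2 < w - 2)

/-- The only downward steps from `u` go to the endpoints of the edge carrying the triangle with
apex `u`: the other edges at `u` lead to later vertices, whose denominators are larger. -/
lemma isStep_iff (u w : ℕ) :
    IsStep a u w ↔ 2 ≤ u ∧ (w = (edgeIdx a (u - 2)).1 ∨ w = (edgeIdx a (u - 2)).2) := by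
  constructor
  · rintro ⟨⟨hu, hw⟩ | ⟨hu, hw⟩ | hedge | ⟨hw, hu⟩, hden⟩
    · subst hu hw; simp [vtxLabel] at hden
    · subst hu hw; simp [vtxLabel] at hden
    · exact hedge
    · have hle := edgeIdx_le a (w - 2)
      have huw : u < w := by omega
      rcases Nat.eq_zero_or_pos u with rfl | hu0
      · have := vtxLabel_den_lt_of_lt a le_rfl (by omega : 1 < w)
        simp [vtxLabel] at hden this
        omega
      · exact absurd (vtxLabel_den_lt_of_lt a hu0 huw) (by omega)
  · rintro ⟨hu, hw⟩
    have hlbl := vtxLabel_edgeIdx a (u - 2)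
    have := one_le_edgeLbl_den a (u - 2)
    refine ⟨Or.inr (Or.inr (Or.inl ⟨hu, hw⟩)), ?_⟩
    rw [vtxLabel_of_two_le a hu]
    rcases hw with rfl | rfl
    · rw [hlbl.1]; omega
    · rw [hlbl.2]; omega

end Triangle

section Paths

variable (a : List ℕ)

def pathSet (v : ℕ) : Set (List ℕ) := {γ | IsPathFrom a v γ}

def pathSum (v : ℕ) : KK := ∑ᶠ γ ∈ pathSet a v, pathW a γ

variable {a}

lemma mem_pathSet {v : ℕ} {γ : List ℕ} : γ ∈ pathSet a v ↔ IsPathFrom a v γ := Iff.rfl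

lemma isPathFrom_iff {v : ℕ} {γ : List ℕ} : IsPathFrom a v γ ↔
    γ.head? = some v ∧ (γ.getLast? = some 0 ∨ γ.getLast? = some 1) ∧ γ.IsChain (IsStep a) :=
  Iff.rfl

lemma isPathFrom_singleton_iff {v u : ℕ} : IsPathFrom a v [u] ↔ u = v ∧ v ≤ 1 := by
  simp only [isPathFrom_iff, List.head?_cons, Option.some.injEq, List.getLast?_singleton,
    List.isChain_singleton, and_true]
  constructor
  · rintro ⟨rfl, h | h⟩ <;> simp_all
  · rintro ⟨rfl, h⟩
    exact ⟨rfl, by interval_cases u <;> simp⟩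

lemma isPathFrom_cons_cons_iff {v u w : ℕ} {t : List ℕ} :
    IsPathFrom a v (u :: w :: t) ↔ u = v ∧ IsStep a v w ∧ IsPathFrom a w (w :: t) := by
  simp only [isPathFrom_iff, List.head?_cons, Option.some.injEq, List.getLast?_cons_cons,
    List.isChain_cons_cons, true_and]
  constructor
  · rintro ⟨rfl, hl, hs, hc⟩
    exact ⟨rfl, hs, hl, hc⟩
  · rintro ⟨rfl, hs, hl, hc⟩
    exact ⟨rfl, hl, hs, hc⟩

lemma pathSet_of_le_one {v : ℕ} (hv : v ≤ 1) : pathSet a v = {[v]} := by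
  ext γ
  rcases γ with _ | ⟨u, _ | ⟨w, t⟩⟩
  · simp [mem_pathSet, isPathFrom_iff]
  · simp [mem_pathSet, isPathFrom_singleton_iff, hv]
  · simp only [mem_pathSet, isPathFrom_cons_cons_iff, isStep_iff,
      Set.mem_singleton_iff, List.cons.injEq, reduceCtorEq, and_false, iff_false]
    omega

lemma pathSet_eq_union {v : ℕ} (hv : 2 ≤ v) :
    pathSet a v = List.cons v '' pathSet a (edgeIdx a (v - 2)).1 ∪
      List.cons v '' pathSet a (edgeIdx a (v - 2)).2 := by
  ext γ
  rcases γ with _ | ⟨u, _ | ⟨w, t⟩⟩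
  · simp [mem_pathSet, isPathFrom_iff]
  · simp only [mem_pathSet, isPathFrom_singleton_iff, Set.mem_union,
      Set.mem_image, List.cons.injEq]
    constructor
    · omega
    · rintro (⟨t, ht, -, rfl⟩ | ⟨t, ht, -, rfl⟩) <;> simp [isPathFrom_iff] at ht
  · simp only [mem_pathSet, isPathFrom_cons_cons_iff, isStep_iff, Set.mem_union,
      Set.mem_image, List.cons.injEq]
    constructor
    · rintro ⟨rfl, ⟨-, rfl | rfl⟩, hp⟩
      exacts [Or.inl ⟨_, hp, rfl, rfl⟩, Or.inr ⟨_, hp, rfl, rfl⟩]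
    · rintro (⟨t', hp, rfl, rfl⟩ | ⟨t', hp, rfl, rfl⟩) <;>
        obtain rfl : w = _ := by simpa using hp.1
      exacts [⟨rfl, ⟨hv, Or.inl rfl⟩, hp⟩, ⟨rfl, ⟨hv, Or.inr rfl⟩, hp⟩]

lemma pathSet_finite (v : ℕ) : (pathSet a v).Finite := by
  induction v using Nat.strong_induction_on with
  | _ v ih =>
    rcases Nat.lt_or_ge v 2 with h | h
    · rw [pathSet_of_le_one (by omega)]
      exact Set.finite_singleton _
    · have := edgeIdx_le a (v - 2)
      rw [pathSet_eq_union h]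
      exact ((ih _ (by omega)).image _).union ((ih _ (by omega)).image _)

lemma pathLeftSet_subset_Ico {w : ℕ} {t : List ℕ} (hc : (w :: t).IsChain (IsStep a)) :
    pathLeftSet a (w :: t) ⊆ Finset.Ico 1 w := by
  induction t generalizing w with
  | nil => simp [pathLeftSet]
  | cons u t ih =>
    obtain ⟨hs, hc⟩ := List.isChain_cons_cons.mp hc
    obtain ⟨hw, hu⟩ := (isStep_iff a w u).mp hs
    have := edgeIdx_le a (w - 2)
    have hu1 := one_le_edgeIdx_snd a (w - 2)
    intro x hx
    rcases Finset.mem_union.mp hx with hx | hx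
    · rw [stepLeft] at hx
      split_ifs at hx with hcond
      · simp only [Finset.mem_Ioc, Finset.mem_Ico] at hx ⊢; omega
      · simp at hx
    · have := Finset.mem_Ico.mp (ih hc hx)
      rw [Finset.mem_Ico]
      omega

lemma pathW_cons_cons (v w : ℕ) {t : List ℕ} (hc : (w :: t).IsChain (IsStep a)) :
    pathW a (v :: w :: t) = (∏ i ∈ stepLeft a v w, triW a i) * pathW a (w :: t) := by
  refine Finset.prod_union (Finset.disjoint_left.mpr fun x hx hx' => ?_)
  have := Finset.mem_Ico.mp (pathLeftSet_subset_Ico hc hx')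
  rw [stepLeft] at hx
  split_ifs at hx
  · have := Finset.mem_Ioc.mp hx; omega
  · simp at hx

lemma pathSum_of_le_one {v : ℕ} (hv : v ≤ 1) : pathSum a v = 1 := by
  simp [pathSum, pathSet_of_le_one hv, pathW, pathLeftSet]

lemma pathW_cons_of_mem_pathSet (v : ℕ) {b : ℕ} {t : List ℕ} (ht : t ∈ pathSet a b) :
    pathW a (v :: t) = (∏ i ∈ stepLeft a v b, triW a i) * pathW a t := by
  obtain ⟨ht₁, -, hc⟩ := ht
  rcases t with _ | ⟨w, t⟩
  · simp at ht₁
  · obtain rfl : w = b := by simpa using ht₁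
    exact pathW_cons_cons v w hc

/-- Sort the paths from `v` by their first step: the step to the left endpoint `b₁` of the edge
carrying the triangle with apex `v` cuts off no triangle, the step to the right endpoint `b₂`
cuts off `T_{b₂}, …, T_{v-1}`. -/
lemma pathSum_eq {v : ℕ} (hv : 2 ≤ v) :
    pathSum a v = pathSum a (edgeIdx a (v - 2)).1 +
      (∏ i ∈ Finset.Icc (edgeIdx a (v - 2)).2 (v - 1), triW a i) *
        pathSum a (edgeIdx a (v - 2)).2 := by
  set b₁ := (edgeIdx a (v - 2)).1
  set b₂ := (edgeIdx a (v - 2)).2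
  have hne : b₁ ≠ b₂ := edgeIdx_fst_ne_snd a (v - 2)
  have hdisj : Disjoint (List.cons v '' pathSet a b₁) (List.cons v '' pathSet a b₂) := by
    rw [Set.disjoint_left]
    rintro _ ⟨t, ht₁, rfl⟩ ⟨t', ht₂, ht⟩
    cases List.cons_injective ht
    exact hne (Option.some_injective _ (ht₁.1.symm.trans ht₂.1))
  have hleft : stepLeft a v b₁ = ∅ := by
    rw [stepLeft, if_neg fun h => hne h.2]
  have hright : stepLeft a v b₂ = Finset.Icc b₂ (v - 1) := by
    have := one_le_edgeIdx_snd a (v - 2)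
    rw [stepLeft, if_pos ⟨hv, rfl⟩]
    ext x
    simp only [Finset.mem_Ioc, Finset.mem_Icc]
    omega
  rw [pathSum, pathSet_eq_union hv,
    finsum_mem_union hdisj ((pathSet_finite b₁).image _) ((pathSet_finite b₂).image _),
    finsum_mem_image List.cons_injective.injOn, finsum_mem_image List.cons_injective.injOn,
    finsum_mem_congr rfl fun _ => pathW_cons_of_mem_pathSet v,
    finsum_mem_congr rfl fun _ => pathW_cons_of_mem_pathSet v, hleft, hright,
    Finset.prod_empty, pathSum, pathSum, mul_finsum_mem]
  simp only [one_mul]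

end Paths

section Monomials

variable (a : List ℕ)

lemma xv_ne_zero (i : ℕ) : xv a i ≠ 0 := by
  unfold xv
  split_ifs
  · exact one_ne_zero
  · exact (IsFractionRing.to_map_ne_zero_of_mem_nonZeroDivisors
      (mem_nonZeroDivisors_of_ne_zero (MvPolynomial.X_ne_zero _)))

/-- The prefactor `D / (x₁ ⋯ x_N)` of the formula, for the triangles `T_1, …, T_j` only. -/
def prefixRatio (j : ℕ) : KK :=
  (∏ i ∈ Finset.Icc 1 j, triDen a i) / ∏ i ∈ Finset.Icc 1 j, xv a i

def expansion (v : ℕ) : KK := prefixRatio a (v - 1) * pathSum a v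

lemma prefixRatio_zero : prefixRatio a 0 = 1 := by simp [prefixRatio]

lemma prefixRatio_succ_mul_xv (j : ℕ) :
    prefixRatio a (j + 1) * xv a (j + 1) = prefixRatio a j * triDen a (j + 1) := by
  have := Finset.prod_ne_zero_iff.mpr fun i (_ : i ∈ Finset.Icc 1 j) => xv_ne_zero a i
  have := xv_ne_zero a (j + 1)
  simp only [prefixRatio, Finset.prod_Icc_succ_top (by omega : 1 ≤ j + 1)]
  field_simp

lemma expansion_of_le_one {v : ℕ} (hv : v ≤ 1) : expansion a v = 1 := by
  rw [expansion, pathSum_of_le_one hv, Nat.sub_eq_zero_of_le hv, prefixRatio_zero, one_mul]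

lemma triDen_one : triDen a 1 = if isRight a 1 then 1 else xv a 2 := rfl

lemma triW_one : triW a 1 = if isRight a 1 then yv 1 * xv a 2 else yv 1 / xv a 2 := rfl

lemma triDen_succ {m : ℕ} (hm : 1 ≤ m) :
    triDen a (m + 1) = if isRight a (m + 1) then (if isRight a m then xv a m else 1)
      else (if isRight a m then xv a m * xv a (m + 2) else xv a (m + 2)) := by
  rw [triDen, if_neg (by omega), Nat.add_sub_cancel]

lemma triW_succ {m : ℕ} (hm : 1 ≤ m) :
    triW a (m + 1) = if isRight a (m + 1)
      then (if isRight a m then yv (m + 1) * xv a (m + 2) / xv a m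
        else yv (m + 1) * xv a m * xv a (m + 2))
      else (if isRight a m then yv (m + 1) / (xv a m * xv a (m + 2))
        else yv (m + 1) * xv a m / xv a (m + 2)) := by
  rw [triW, if_neg (by omega), Nat.add_sub_cancel]

lemma prefixRatio_mul_xv_eq_left {m : ℕ} (hm : 1 ≤ m) :
    prefixRatio a m * xv a m =
      prefixRatio a ((edgeIdx a (m - 1)).1 - 1) * (if isRight a m then 1 else xv a (m + 1)) := by
  induction m, hm using Nat.le_induction with
  | base =>
    rw [prefixRatio_succ_mul_xv, prefixRatio_zero, triDen_one]
    simp [edgeIdx, prefixRatio_zero]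
  | succ m hm ih =>
    rw [prefixRatio_succ_mul_xv, triDen_succ a hm, Nat.add_sub_cancel]
    by_cases hr : isRight a m
    · obtain ⟨n, rfl⟩ : ∃ n, m = n + 1 := ⟨m - 1, by omega⟩
      rw [if_pos hr, mul_one, Nat.add_sub_cancel] at ih
      rw [edgeIdx_succ_of_isRight hr]
      by_cases hr' : isRight a (n + 1 + 1)
      · simp only [if_pos hr', if_pos hr, ih, mul_one]
      · simp only [if_neg hr', if_pos hr, ← mul_assoc, ih]
    · obtain ⟨n, rfl⟩ : ∃ n, m = n + 1 := ⟨m - 1, by omega⟩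
      rw [edgeIdx_succ_of_not_isRight hr]
      by_cases hr' : isRight a (n + 1 + 1) <;> simp [hr, hr']

lemma prefixRatio_mul_xv_mul_prod_triW_eq_right {m : ℕ} (hm : 1 ≤ m) :
    prefixRatio a m * xv a m * ∏ i ∈ Finset.Icc (edgeIdx a (m - 1)).2 m, triW a i =
      (∏ i ∈ Finset.Icc (edgeIdx a (m - 1)).2 m, yv i) *
        prefixRatio a ((edgeIdx a (m - 1)).2 - 1) * (if isRight a m then xv a (m + 1) else 1) := by
  induction m, hm using Nat.le_induction with
  | base =>
    have := xv_ne_zero a 2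
    simp only [edgeIdx, Nat.sub_self, Finset.Icc_self, Finset.prod_singleton, prefixRatio_zero]
    rw [prefixRatio_succ_mul_xv, prefixRatio_zero, triDen_one, triW_one]
    split_ifs <;> field_simp
  | succ m hm ih =>
    have := xv_ne_zero a m
    have := xv_ne_zero a (m + 2)
    obtain ⟨n, rfl⟩ : ∃ n, m = n + 1 := ⟨m - 1, by omega⟩
    rw [Nat.add_sub_cancel]
    by_cases hr : isRight a (n + 1)
    · rw [edgeIdx_succ_of_isRight hr]
      simp only [Finset.Icc_self, Finset.prod_singleton, show n + 2 - 1 = n + 1 by omega]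
      rw [prefixRatio_succ_mul_xv, triDen_succ a hm, triW_succ a hm]
      by_cases hr' : isRight a (n + 1 + 1) <;> simp only [hr, hr', if_true, if_false] <;>
        field_simp
    · have := (edgeIdx_le a n).2
      rw [if_neg hr, mul_one, Nat.add_sub_cancel] at ih
      rw [edgeIdx_succ_of_not_isRight hr, Finset.prod_Icc_succ_top (by omega) (triW a),
        Finset.prod_Icc_succ_top (by omega) yv, ← mul_assoc, prefixRatio_succ_mul_xv,
        triDen_succ a hm, triW_succ a hm]
      by_cases hr' : isRight a (n + 1 + 1) <;> simp only [hr, hr', if_true, if_false]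
      · linear_combination (yv (n + 1 + 1) * xv a (n + 1 + 2)) * ih
      · field_simp
        linear_combination yv (n + 1 + 1) * ih

/-- The exchange relation of `μ_m`: the path recursion `pathSum_eq` combined with the two monomial
identities above. -/
lemma expansion_mul_xv {m : ℕ} (hm : 1 ≤ m) :
    expansion a (m + 1) * xv a m =
      expansion a (edgeIdx a (m - 1)).1 * (if isRight a m then 1 else xv a (m + 1)) +
        (∏ i ∈ Finset.Icc (edgeIdx a (m - 1)).2 m, yv i) * expansion a (edgeIdx a (m - 1)).2 *
          (if isRight a m then xv a (m + 1) else 1) := by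
  have hA := prefixRatio_mul_xv_eq_left a hm
  have hB := prefixRatio_mul_xv_mul_prod_triW_eq_right a hm
  simp only [expansion, Nat.add_sub_cancel]
  rw [pathSum_eq (by omega : 2 ≤ m + 1), show m + 1 - 2 = m - 1 by omega, Nat.add_sub_cancel]
  linear_combination pathSum a (edgeIdx a (m - 1)).1 * hA +
    pathSum a (edgeIdx a (m - 1)).2 * hB

end Monomials

section Mutation

variable (a : List ℕ)

lemma mutate_B_skew {s : Seed} (hs : ∀ i j, s.B i j = -s.B j i) (k i j : ℕ) :
    (mutate a s k).B i j = -(mutate a s k).B j i := by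
  simp only [mutate]
  split_ifs with h h' h'
  · rw [hs i j]
  · tauto
  · tauto
  · rw [hs i j, hs i k, hs k j, Int.sign_neg, Int.sign_mul_max_mul_zero_comm]
    ring_nf

lemma seedAfter_succ (k : ℕ) : seedAfter a (k + 1) = mutate a (seedAfter a k) (k + 1) := by
  rw [seedAfter, List.range'_1_concat, List.foldl_append, List.foldl_cons, List.foldl_nil,
    Nat.add_comm 1 k]
  rfl

lemma tropEval_indicator {c d : ℕ} (hc : 1 ≤ c) (hd : d ≤ a.sum - 1) :
    tropEval a (fun i => if c ≤ i ∧ i ≤ d then 1 else 0) = ∏ i ∈ Finset.Icc c d, yv i := by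
  rw [tropEval, ← Finset.prod_subset (Finset.Icc_subset_Icc hc hd)]
  · refine Finset.prod_congr rfl fun i hi => ?_
    rw [if_pos (Finset.mem_Icc.mp hi), zpow_one]
  · intro i _ hi
    rw [if_neg (by simpa using hi), zpow_zero]

lemma tropEval_eq_one {e : ℕ → ℤ} (he : ∀ i, e i = 0) : tropEval a e = 1 :=
  Finset.prod_eq_one fun i _ => by rw [he, zpow_zero]

end Mutation

section SeedInvariant

variable (a : List ℕ)

/-- `b_{i+1,i}` in the initial quiver. -/
def arrowSign (i : ℕ) : ℤ := if isRight a i then 1 else -1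

/-- The column `k + 1` of the exchange matrix after `μ_k ∘ ⋯ ∘ μ_1`: the vertex `k + 1` is joined
to the variables of the endpoints of the edge carrying `T_{k+1}` (vertex `v` of the ancestral
triangle carries the variable `v - 1`) and, as in `Q₀`, to `k + 2`. -/
def activeCol (k i : ℕ) : ℤ :=
  if i + 1 = (edgeIdx a k).2 then 1
  else if i + 1 = (edgeIdx a k).1 then -1
  else if i = k + 2 then arrowSign a (k + 1) else 0

/-- Of the exchange matrix only the column `k + 1` and the part not yet touched by the mutations
are tracked; the rest is never used. -/
structure SeedInv (k : ℕ) : Prop where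
  B_skew : ∀ i j, (seedAfter a k).B i j = -(seedAfter a k).B j i
  B_eq_initSeed : ∀ i j, 1 ≤ i → i ≤ a.sum - 1 → 1 ≤ j → j ≤ a.sum - 1 → k + 2 ≤ max i j →
    (seedAfter a k).B i j = (initSeed a).B i j
  B_activeCol : k + 1 ≤ a.sum - 1 → ∀ i, 1 ≤ i → i ≤ a.sum - 1 →
    (seedAfter a k).B i (k + 1) = activeCol a k i
  u_active : k + 1 ≤ a.sum - 1 → ∀ i,
    (seedAfter a k).u (k + 1) i = if (edgeIdx a k).2 ≤ i ∧ i ≤ k + 1 then 1 else 0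
  u_eq_initSeed : ∀ j, k + 2 ≤ j → j ≤ a.sum - 1 → (seedAfter a k).u j = (initSeed a).u j
  X_eq : ∀ j, 1 ≤ j → j ≤ a.sum - 1 →
    (seedAfter a k).X j = if j ≤ k then expansion a (j + 1) else xv a j

lemma initSeed_B_eq_zero {i j : ℕ} (h₁ : j ≠ i + 1) (h₂ : i ≠ j + 1) : (initSeed a).B i j = 0 := by
  simp only [initSeed]
  rw [if_neg (by omega), if_neg (by omega)]

lemma initSeed_B_succ {i : ℕ} (h₁ : 1 ≤ i) (h₂ : i + 1 ≤ a.sum - 1) :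
    (initSeed a).B (i + 1) i = arrowSign a i := by
  dsimp only [initSeed]
  rw [if_neg (by omega), if_pos ⟨h₁, rfl, h₂⟩, arrowSign]

lemma seedInv_zero : SeedInv a 0 where
  B_skew i j := by
    simp only [seedAfter, List.range'_zero, List.foldl_nil, initSeed]
    split_ifs <;> omega
  B_eq_initSeed _ _ _ _ _ _ _ := rfl
  B_activeCol _ i h₁ h₂ := by
    rcases eq_or_ne i 2 with rfl | hi
    · exact initSeed_B_succ a le_rfl h₂
    · have h₀ : edgeIdx a 0 = (0, 1) := rfl
      rw [activeCol, h₀, if_neg (by omega), if_neg (by omega), if_neg hi]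
      exact initSeed_B_eq_zero a (by omega) (by omega)
  u_active _ i := by
    simp only [seedAfter, List.range'_zero, List.foldl_nil, initSeed, edgeIdx]
    split_ifs <;> omega
  u_eq_initSeed _ _ _ := rfl
  X_eq j _ _ := by
    simp only [seedAfter, List.range'_zero, List.foldl_nil, initSeed]
    rw [if_neg (by omega)]

end SeedInvariant

section SeedStep

variable {a : List ℕ} {k : ℕ}

lemma activeCol_eq_zero_of_le {i : ℕ} (hi : k + 3 ≤ i) : activeCol a k i = 0 := by
  have := edgeIdx_le a k
  rw [activeCol, if_neg (by omega), if_neg (by omega), if_neg (by omega)]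

lemma activeCol_apex : activeCol a k (k + 2) = arrowSign a (k + 1) := by
  have := edgeIdx_le a k
  rw [activeCol, if_neg (by omega), if_neg (by omega), if_pos rfl]

lemma activeCol_snd : activeCol a k ((edgeIdx a k).2 - 1) = 1 := by
  have := one_le_edgeIdx_snd a k
  rw [activeCol, if_pos (by omega)]

lemma activeCol_fst (h : 1 ≤ (edgeIdx a k).1) : activeCol a k ((edgeIdx a k).1 - 1) = -1 := by
  have := edgeIdx_fst_ne_snd a k
  rw [activeCol, if_neg (by omega), if_pos (by omega)]

namespace SeedInv

variable (h : SeedInv a k) (hk : k + 1 ≤ a.sum - 1)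
include h hk

lemma B_active_row {j : ℕ} (hj₁ : 1 ≤ j) (hj₂ : j ≤ a.sum - 1) :
    (seedAfter a k).B (k + 1) j = -activeCol a k j := by
  rw [h.B_skew, h.B_activeCol hk j hj₁ hj₂]

lemma ite_X_pred_pow_eq_expansion {b : ℕ} (hb : b ≤ k + 1) {e : ℤ} (he : 2 ≤ b → e = 1) :
    (if b - 1 ∈ Finset.Icc 1 (a.sum - 1) then (seedAfter a k).X (b - 1) ^ e else 1) =
      expansion a b := by
  rcases Nat.lt_or_ge b 2 with hb₂ | hb₂
  · rw [if_neg (by simp; omega), expansion_of_le_one a (by omega)]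
  · rw [if_pos (Finset.mem_Icc.mpr ⟨by omega, by omega⟩), he hb₂, zpow_one,
      h.X_eq _ (by omega) (by omega), if_pos (by omega), Nat.sub_add_cancel (by omega)]

lemma ite_X_apex_pow_eq (e : ℤ) :
    (if k + 2 ∈ Finset.Icc 1 (a.sum - 1) then (seedAfter a k).X (k + 2) ^ e else 1) =
      xv a (k + 2) ^ e := by
  by_cases hk₂ : k + 2 ≤ a.sum - 1
  · rw [if_pos (Finset.mem_Icc.mpr ⟨by omega, hk₂⟩), h.X_eq _ (by omega) hk₂, if_neg (by omega)]
  · rw [if_neg (by simp; omega), xv, if_pos (by omega), one_zpow]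

lemma prod_X_pow_max_B :
    ∏ i ∈ Finset.Icc 1 (a.sum - 1), (seedAfter a k).X i ^ max ((seedAfter a k).B i (k + 1)) 0 =
      expansion a (edgeIdx a k).2 * (if isRight a (k + 1) then xv a (k + 2) else 1) := by
  have := edgeIdx_le a k
  rw [Finset.prod_congr rfl fun i hi => by
      rw [h.B_activeCol hk i (Finset.mem_Icc.mp hi).1 (Finset.mem_Icc.mp hi).2],
    Finset.prod_eq_ite_mul_ite (p := (edgeIdx a k).2 - 1) (q := k + 2) (by omega)
      fun i _ hp hq => ?_,
    h.ite_X_pred_pow_eq_expansion hk (by omega) fun _ => by rw [activeCol_snd]; rfl,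
    h.ite_X_apex_pow_eq hk, activeCol_apex, arrowSign]
  · split_ifs <;> simp
  · have : max (activeCol a k i) 0 = 0 := by
      rw [activeCol]; split_ifs <;> omega
    rw [this, zpow_zero]

lemma prod_X_pow_max_neg_B :
    ∏ i ∈ Finset.Icc 1 (a.sum - 1), (seedAfter a k).X i ^ max (-(seedAfter a k).B i (k + 1)) 0 =
      expansion a (edgeIdx a k).1 * (if isRight a (k + 1) then 1 else xv a (k + 2)) := by
  have := edgeIdx_le a k
  rw [Finset.prod_congr rfl fun i hi => by
      rw [h.B_activeCol hk i (Finset.mem_Icc.mp hi).1 (Finset.mem_Icc.mp hi).2],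
    Finset.prod_eq_ite_mul_ite (p := (edgeIdx a k).1 - 1) (q := k + 2) (by omega)
      fun i _ hp hq => ?_,
    h.ite_X_pred_pow_eq_expansion hk (by omega) fun h₂ => by rw [activeCol_fst (by omega)]; rfl,
    h.ite_X_apex_pow_eq hk, activeCol_apex, arrowSign]
  · split_ifs <;> simp
  · have : max (-activeCol a k i) 0 = 0 := by
      rw [activeCol]; split_ifs <;> omega
    rw [this, zpow_zero]

lemma X_succ_active : (seedAfter a (k + 1)).X (k + 1) = expansion a (k + 2) := by
  have hx := xv_ne_zero a (k + 1)
  have htrop : tropEval a ((seedAfter a k).u (k + 1)) =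
      ∏ i ∈ Finset.Icc (edgeIdx a k).2 (k + 1), yv i := by
    rw [funext (h.u_active hk), tropEval_indicator a (one_le_edgeIdx_snd a k) hk]
  have htrop_min : tropEval a (fun i => min ((seedAfter a k).u (k + 1) i) 0) = 1 :=
    tropEval_eq_one a fun i => by rw [h.u_active hk]; split_ifs <;> rfl
  rw [seedAfter_succ]
  simp only [mutate, if_true]
  rw [h.prod_X_pow_max_B hk, h.prod_X_pow_max_neg_B hk, htrop, htrop_min,
    h.X_eq _ (by omega) hk, if_neg (show ¬k + 1 ≤ k by omega), one_mul, div_eq_iff hx,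
    expansion_mul_xv a (by omega : 1 ≤ k + 1), Nat.add_sub_cancel]
  ring

lemma B_eq_initSeed_succ {i j : ℕ} (hi₁ : 1 ≤ i) (hi₂ : i ≤ a.sum - 1) (hj₁ : 1 ≤ j)
    (hj₂ : j ≤ a.sum - 1) (hij : k + 3 ≤ max i j) :
    (seedAfter a (k + 1)).B i j = (initSeed a).B i j := by
  rw [seedAfter_succ]
  simp only [mutate]
  split_ifs with hik
  · rw [h.B_eq_initSeed i j hi₁ hi₂ hj₁ hj₂ (by omega), initSeed_B_eq_zero a (by omega) (by omega),
      neg_zero]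
  · have hprod : (seedAfter a k).B i (k + 1) * (seedAfter a k).B (k + 1) j = 0 := by
      rcases le_or_gt (k + 3) i with hi | hi
      · rw [h.B_activeCol hk i hi₁ hi₂, activeCol_eq_zero_of_le hi, zero_mul]
      · rw [h.B_active_row hk hj₁ hj₂, activeCol_eq_zero_of_le (by omega), neg_zero, mul_zero]
    rw [hprod, h.B_eq_initSeed i j hi₁ hi₂ hj₁ hj₂ (by omega), max_self, mul_zero, add_zero]

/-- Mutating at `k + 1` adds a single arrow, along the 2-path `k + 2 — k + 1 — i` where `i` is the
variable of the endpoint of the old active edge that remains an endpoint of the new one. -/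
lemma B_activeCol_succ (hk₂ : k + 2 ≤ a.sum - 1) {i : ℕ} (hi₁ : 1 ≤ i) (hi₂ : i ≤ a.sum - 1) :
    (seedAfter a (k + 1)).B i (k + 2) = activeCol a (k + 1) i := by
  have := edgeIdx_le a k
  have := edgeIdx_fst_ne_snd a k
  have hrow := h.B_active_row hk (j := k + 2) (by omega) hk₂
  rw [activeCol_apex] at hrow
  rw [seedAfter_succ]
  simp only [mutate]
  rcases eq_or_ne i (k + 1) with rfl | hik
  · rw [if_pos (Or.inl rfl), hrow, neg_neg, activeCol, arrowSign]
    by_cases hr : isRight a (k + 1)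
    · simp [edgeIdx_succ_of_isRight hr, hr]
    · simp [edgeIdx_succ_of_not_isRight hr, hr]
      omega
  · have hinit : (seedAfter a k).B i (k + 2) = if i = k + 3 then arrowSign a (k + 2) else 0 := by
      rw [h.B_eq_initSeed i (k + 2) hi₁ hi₂ (by omega) hk₂ (by omega)]
      split_ifs with hi3
      · subst hi3; exact initSeed_B_succ a (by omega) hi₂
      · exact initSeed_B_eq_zero a (by omega) (by omega)
    rw [if_neg (by omega), hinit, hrow, h.B_activeCol hk i hi₁ hi₂]
    by_cases hr : isRight a (k + 1)
    · simp only [activeCol, edgeIdx_succ_of_isRight hr, arrowSign, if_pos hr]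
      split_ifs <;> first | omega | rfl
    · simp only [activeCol, edgeIdx_succ_of_not_isRight hr, arrowSign, if_neg hr]
      split_ifs <;> first | omega | rfl

lemma u_active_succ (hk₂ : k + 2 ≤ a.sum - 1) (i : ℕ) :
    (seedAfter a (k + 1)).u (k + 2) i =
      if (edgeIdx a (k + 1)).2 ≤ i ∧ i ≤ k + 2 then 1 else 0 := by
  have := edgeIdx_le a k
  have hrow := h.B_active_row hk (j := k + 2) (by omega) hk₂
  rw [activeCol_apex, arrowSign] at hrow
  rw [seedAfter_succ]
  simp only [mutate]
  rw [if_neg (by omega), hrow, h.u_active hk, h.u_eq_initSeed (k + 2) le_rfl hk₂]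
  simp only [initSeed]
  by_cases hr : isRight a (k + 1)
  · rw [edgeIdx_succ_of_isRight hr]
    simp only [hr, if_true]
    split_ifs <;> omega
  · rw [edgeIdx_succ_of_not_isRight hr]
    simp only [hr, if_false]
    split_ifs <;> omega

lemma u_eq_initSeed_succ {j : ℕ} (hj₁ : k + 3 ≤ j) (hj₂ : j ≤ a.sum - 1) :
    (seedAfter a (k + 1)).u j = (initSeed a).u j := by
  rw [seedAfter_succ, ← h.u_eq_initSeed j (by omega) hj₂]
  ext i
  simp only [mutate]
  rw [if_neg (by omega), h.B_active_row hk (by omega) hj₂, activeCol_eq_zero_of_le hj₁]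
  simp

lemma X_eq_succ {j : ℕ} (hj₁ : 1 ≤ j) (hj₂ : j ≤ a.sum - 1) :
    (seedAfter a (k + 1)).X j = if j ≤ k + 1 then expansion a (j + 1) else xv a j := by
  rcases eq_or_ne j (k + 1) with rfl | hjk
  · rw [h.X_succ_active hk, if_pos le_rfl]
  · rw [seedAfter_succ]
    simp only [mutate]
    rw [if_neg hjk, h.X_eq j hj₁ hj₂]
    split_ifs <;> first | rfl | omega

lemma succ : SeedInv a (k + 1) where
  B_skew := by rw [seedAfter_succ]; exact mutate_B_skew a h.B_skew (k + 1)
  B_eq_initSeed _ _ hi₁ hi₂ hj₁ hj₂ hij := h.B_eq_initSeed_succ hk hi₁ hi₂ hj₁ hj₂ hij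
  B_activeCol hk₂ _ hi₁ hi₂ := h.B_activeCol_succ hk hk₂ hi₁ hi₂
  u_active hk₂ := h.u_active_succ hk hk₂
  u_eq_initSeed _ hj₁ hj₂ := h.u_eq_initSeed_succ hk hj₁ hj₂
  X_eq _ hj₁ hj₂ := h.X_eq_succ hk hj₁ hj₂

end SeedInv

lemma seedInv (a : List ℕ) {k : ℕ} (hk : k ≤ a.sum - 1) : SeedInv a k := by
  induction k with
  | zero => exact seedInv_zero a
  | succ k ih => exact (ih (by omega)).succ hk

end SeedStep

theorem cluster_expansion_formula_general (a : List ℕ) (p q : ℕ)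
    (hp : 0 < p) (hlt : p < q)
    (hval : cf a = (p : ℚ) / q) :
    clusterVar a =
      (∏ i ∈ Finset.Icc 1 (a.sum - 1), triDen a i) /
          (∏ i ∈ Finset.Icc 1 (a.sum - 1), xv a i) *
        ∑ᶠ γ ∈ {γ : List ℕ | IsPathFrom a a.sum γ}, pathW a γ := by
  have hq : (0 : ℚ) < q := by exact_mod_cast hp.trans hlt
  have hsum : 2 ≤ a.sum := two_le_sum_of_cf_pos_of_lt_one
    (by rw [hval]; positivity) (by rw [hval, div_lt_one hq]; exact_mod_cast hlt)
  have hX := (seedInv a (le_refl (a.sum - 1))).X_eq (a.sum - 1) (by omega) le_rfl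
  rw [if_pos le_rfl, Nat.sub_add_cancel (by omega)] at hX
  exact hX

/-- **Theorem (cluster expansion formula).**  Let `p/q = [a₁,…,aₙ]` be an irreducible
fraction with `0 < p/q < 1` and `N = a₁ + ⋯ + aₙ − 1`.  Then the cluster variable
`X_{p/q}` equals `(D/(x₁x₂⋯x_N)) · Σ_{γ ∈ Γ_{p/q}} w(γ)`, where
`D = ∏_{i=1}^N (the denominator of w(T_i))` and `Γ_{p/q}` is the set of all paths of the
ancestral triangle of `p/q` (paths start at the top vertex, which has index `N + 1 = a.sum`). -/
theorem cluster_expansion_formula (a : List ℕ) (p q : ℕ)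
    (hpos : ∀ x ∈ a, 0 < x) (hne : a ≠ [])
    (hp : 0 < p) (hlt : p < q) (hcop : Nat.Coprime p q)
    (hval : cf a = (p : ℚ) / q) :
    clusterVar a =
      (∏ i ∈ Finset.Icc 1 (a.sum - 1), triDen a i) /
          (∏ i ∈ Finset.Icc 1 (a.sum - 1), xv a i) *
        ∑ᶠ γ ∈ {γ : List ℕ | IsPathFrom a a.sum γ}, pathW a γ :=
  cluster_expansion_formula_general a p q hp hlt hval

end TwoBridge

end
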